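/- arXiv:2507.05738 — 2 statements merged into one kernel-verified Lean document; each statement's English description precedes it below -/
import Mathlib

section
/- In any pure-strategy Nash equilibrium of the k-price auction with 3 ≤ k ≤ n, the winning agent i satisfies v_i > v_{n−(k−3)}; in particular, an agent with valuation exactly v_{n−(k−3)} or lower can never win in equilibrium. -/
open Classical

/-- The k-th highest bid (k counted from 1). -/
noncomputable def kthHighest {n : ℕ} (b : Fin n → ℝ) (k : ℕ) : ℝ :=
  ((List.ofFn b).mergeSort (fun x y => decide (y ≤ x))).getD (k - 1) 0

/-- Agent `i` wins: her bid is highest, with ties broken toward the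
agent with the highest valuation, i.e. (for strictly decreasing valuations)
the lowest index among the maximal bidders. -/
def wins {n : ℕ} (b : Fin n → ℝ) (i : Fin n) : Prop :=
  (∀ j, b j ≤ b i) ∧ ∀ j, b j = b i → i ≤ j

/-- The price paid by the winner in the k-price auction (2 ≤ k ≤ n), or in the
first-price auction (the case k = n+1), where the winner pays the highest bid. -/
noncomputable def price {n : ℕ} (k : ℕ) (b : Fin n → ℝ) : ℝ :=
  if k = n + 1 then kthHighest b 1 else kthHighest b k

/-- The winner gets her valuation minus the price; losers get 0. -/
noncomputable def utility {n : ℕ} (v : Fin n → ℝ) (k : ℕ) (b : Fin n → ℝ)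
    (i : Fin n) : ℝ :=
  if wins b i then v i - price k b else 0

/-- Pure-strategy Nash equilibrium with nonnegative bids: no agent can strictly
improve her utility by a unilateral deviation to another nonnegative bid. -/
def NashEq {n : ℕ} (v : Fin n → ℝ) (k : ℕ) (b : Fin n → ℝ) : Prop :=
  (∀ i, 0 ≤ b i) ∧
  ∀ i : Fin n, ∀ b' : ℝ, 0 ≤ b' →
    utility v k (Function.update b i b') i ≤ utility v k b i

/-- One-based valuation indexing, with the convention `v_{n+1} = 0`. -/
noncomputable def vIdx {n : ℕ} (v : Fin n → ℝ) (j : ℕ) : ℝ :=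
  if h : 1 ≤ j ∧ j ≤ n then v ⟨j - 1, by omega⟩ else 0


/-!
Let `p` be the price. Bidding `0` guarantees the winner `i` a nonnegative utility, so `p ≤ v i`.
If `i` were among the last `k - 2` agents, then at most `k - 2` agents have value `≤ v i`, while
at least `k` agents bid `≥ p`; so some agent `j ≠ i` with `v j > p` bids `≥ p`. By outbidding
everybody, such a `j` would win at a price `≤ p < v j` unless `k - 1` other agents bid strictly
above `p`. Since at most `k - 1` bids exceed `p`, every bid above `p` must then come from the
agents of value `≤ v i`, who are at most `k - 2`: a contradiction.
-/

open Finset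

theorem List.Pairwise.lt_countP_iff_mem {α : Type*} [Preorder α] {s : List α}
    (hs : s.Pairwise (· ≥ ·)) {S : Set α} [DecidablePred (· ∈ S)] (hS : IsUpperSet S) {i : ℕ}
    (hi : i < s.length) : i < s.countP (· ∈ S) ↔ s[i] ∈ S := by
  have hanti {j j' : ℕ} (hj : j < s.length) (hj' : j' < s.length) (hjj' : j ≤ j') :
      s[j'] ≤ s[j] := by
    rcases hjj'.eq_or_lt with rfl | hjj'
    · rfl
    · exact List.pairwise_iff_getElem.mp hs j j' hj hj' hjj'
  constructor
  · intro hcount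
    by_contra hmem
    have hdrop : (s.drop i).countP (· ∈ S) = 0 := by
      refine List.countP_eq_zero.mpr fun a ha hmem' => hmem ?_
      obtain ⟨j, hj, rfl⟩ := List.mem_drop_iff_getElem.mp ha
      exact hS (hanti hi (by omega) (Nat.le_add_right i j)) (by simpa using hmem')
    have htake := (s.take i).countP_le_length (p := (· ∈ S))
    rw [← s.take_append_drop i, List.countP_append, hdrop] at hcount
    simp only [List.length_take] at htake
    omega
  · intro hmem
    have htake : (s.take (i + 1)).countP (· ∈ S) = i + 1 := by
      rw [List.countP_eq_length.mpr, List.length_take]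
      · omega
      intro a ha
      obtain ⟨j, hj, rfl⟩ := List.mem_take_iff_getElem.mp ha
      simpa using hS (hanti (by omega) hi (by omega)) hmem
    have := (s.take_sublist (i + 1)).countP_le (p := (· ∈ S))
    omega

theorem List.countP_ofFn {α : Type*} {n : ℕ} (b : Fin n → α) (q : α → Prop) [DecidablePred q] :
    (List.ofFn b).countP (q ·) = #{l | q (b l)} := by
  rw [← Multiset.coe_countP, ← Fin.univ_val_map, Multiset.countP_map, card_def, filter_val]

section kthHighest

variable {n k : ℕ} (b : Fin n → ℝ)

theorem kthHighest_mem_iff (hk : 1 ≤ k) (hkn : k ≤ n) {S : Set ℝ} (hS : IsUpperSet S) :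
    kthHighest b k ∈ S ↔ k ≤ #{l | b l ∈ S} := by
  set s := (List.ofFn b).mergeSort (fun x y => decide (y ≤ x))
  have hperm : s.Perm (List.ofFn b) := List.mergeSort_perm _ _
  have hsorted : s.Pairwise (· ≥ ·) := by
    simpa using List.pairwise_mergeSort (le := fun x y : ℝ => decide (y ≤ x))
      (fun _ _ _ h₁ h₂ => by simp at *; linarith) (fun x y => by simpa using le_total y x) _
  have hlen : k - 1 < s.length := by rw [hperm.length_eq, List.length_ofFn]; omega
  rw [kthHighest, List.getD_eq_getElem s 0 hlen, ← hsorted.lt_countP_iff_mem hS hlen,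
    hperm.countP_eq, List.countP_ofFn b (· ∈ S)]
  omega

theorem kthHighest_le_iff (hk : 1 ≤ k) (hkn : k ≤ n) {x : ℝ} :
    kthHighest b k ≤ x ↔ #{l | x < b l} < k := by
  simpa using (kthHighest_mem_iff b hk hkn (isUpperSet_Ioi x)).not

theorem le_kthHighest_iff (hk : 1 ≤ k) (hkn : k ≤ n) {x : ℝ} :
    x ≤ kthHighest b k ↔ k ≤ #{l | x ≤ b l} :=
  kthHighest_mem_iff b hk hkn (isUpperSet_Ici x)

theorem kthHighest_zero : kthHighest (0 : Fin n → ℝ) k = 0 := by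
  rw [kthHighest, List.getD_eq_getElem?_getD]
  cases h : ((List.ofFn (0 : Fin n → ℝ)).mergeSort (fun x y => decide (y ≤ x)))[k - 1]? with
  | none => rfl
  | some x =>
    have hx := (List.mergeSort_perm _ _).subset (List.mem_of_getElem? h)
    obtain ⟨_, rfl⟩ := List.mem_ofFn.mp hx
    rfl

end kthHighest

section Auction

variable {n k : ℕ} {v b : Fin n → ℝ} {i j : Fin n}

theorem wins.unique (hi : wins b i) (hj : wins b j) : i = j :=
  le_antisymm (hi.2 j (le_antisymm (hi.1 j) (hj.1 i))) (hj.2 i (le_antisymm (hj.1 i) (hi.1 j)))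

theorem wins_update_of_lt {y : ℝ} (hy : ∀ l, l ≠ j → b l < y) : wins (Function.update b j y) j := by
  refine ⟨fun l => ?_, fun l hl => ?_⟩ <;> rcases eq_or_ne l j with rfl | hlj
  · rfl
  · simpa [hlj] using (hy l hlj).le
  · rfl
  · simp [hlj] at hl
    exact absurd hl (hy l hlj).ne

theorem price_eq_kthHighest (hkn : k ≤ n) (b : Fin n → ℝ) : price k b = kthHighest b k :=
  if_neg (by omega)

theorem utility_of_wins (hw : wins b i) : utility v k b i = v i - price k b := if_pos hw

theorem NashEq.utility_nonneg (hb : NashEq v k b) (hvi : 0 ≤ v i) : 0 ≤ utility v k b i := by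
  refine le_trans ?_ (hb.2 i 0 le_rfl)
  by_cases hw : wins (Function.update b i 0) i
  · have hzero : Function.update b i 0 = 0 := funext fun l =>
      le_antisymm (by simpa using hw.1 l) (by rcases eq_or_ne l i with rfl | hl <;> simp [*, hb.1 l])
    rw [utility_of_wins hw, hzero, price, kthHighest_zero, kthHighest_zero]
    simpa using hvi
  · rw [utility, if_neg hw]

theorem NashEq.le_of_card_erase_lt (hb : NashEq v k b) (hkn : k ≤ n) (hw : wins b i) (hji : j ≠ i)
    {x : ℝ} (hcard : #(({l | x < b l} : Finset (Fin n)).erase j) < k - 1) : v j ≤ x := by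
  -- `j` outbids everybody; the bids above `x` are then those of `j` and of at most `k - 2` others
  set b' := Function.update b j (b i + 1)
  have hw' : wins b' j := wins_update_of_lt fun l _ => by linarith [hw.1 l]
  have hsub : ({l | x < b' l} : Finset (Fin n)) ⊆
      insert j (({l | x < b l} : Finset (Fin n)).erase j) := by
    intro l hl
    rcases eq_or_ne l j with rfl | hlj
    · exact mem_insert_self _ _
    · simp_all [b']
  have hprice : price k b' ≤ x := by
    rw [price_eq_kthHighest hkn, kthHighest_le_iff b' (by omega) hkn]
    exact (card_le_card hsub).trans_lt ((card_insert_le _ _).trans_lt (by omega))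
  have hdev := hb.2 j (b i + 1) (by linarith [hw.1 i, hb.1 i])
  rw [utility_of_wins hw', utility, if_neg fun hj => hji (hj.unique hw)] at hdev
  linarith

theorem NashEq.winner_add_le (hb : NashEq v k b) (hv : StrictAnti v) (hvi : 0 ≤ v i)
    (hkn : k ≤ n) (hw : wins b i) : (i : ℕ) + k ≤ n + 1 := by
  by_contra! hik
  set p := kthHighest b k
  have hpv : p ≤ v i := by
    have := hb.utility_nonneg hvi
    rw [utility_of_wins hw, price_eq_kthHighest hkn] at this
    linarith
  set T : Finset (Fin n) := {l | p < b l}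
  have hT : #T < k := (kthHighest_le_iff b (by omega) hkn).1 le_rfl
  set U : Finset (Fin n) := {l | p ≤ b l}
  have hU : k ≤ #U := (le_kthHighest_iff b (by omega) hkn).1 le_rfl
  have hlow : #(Ici i) ≤ k - 2 := by rw [Fin.card_Ici]; omega
  set H := U \ Ici i
  have hH {j} (hj : j ∈ H) : j ≠ i ∧ p < v j := by
    simp only [H, mem_sdiff, mem_Ici, not_le] at hj
    exact ⟨hj.2.ne, hpv.trans_lt (hv hj.2)⟩
  have hdev {j} (hj : j ∈ H) : k - 1 ≤ #(T.erase j) := by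
    by_contra! h
    exact (hH hj).2.not_ge (hb.le_of_card_erase_lt hkn hw (hH hj).1 h)
  have hTH : T ⊆ Ici i := by
    intro l hlT
    by_contra hl
    have hlH : l ∈ H := by simp_all [H, U, T, le_of_lt]
    have := hdev hlH
    rw [card_erase_of_mem hlT] at this
    omega
  obtain ⟨j, hj⟩ : H.Nonempty := card_pos.mp (by
    have : #U - #(Ici i) ≤ #H := le_card_sdiff _ _
    omega)
  have := (hdev hj).trans ((card_erase_le).trans (card_le_card hTH))
  omega

end Auction

theorem stmt7_general {n : ℕ} (v : Fin n → ℝ) (hv : StrictAnti v) (hvpos : ∀ i, 0 < v i) (k : ℕ) (hk3 : 3 ≤ k) (hkn : k ≤ n)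
    (b : Fin n → ℝ) (hb : NashEq v k b) (i : Fin n) (hw : wins b i) :
    vIdx v (n + 3 - k) < v i := by
  have hi := hb.winner_add_le hv (hvpos i).le hkn hw
  rw [vIdx, dif_pos (by omega)]
  exact hv (Fin.mk_lt_mk.mpr (by omega))

theorem stmt7 {n : ℕ} (hn : 2 ≤ n) (v : Fin n → ℝ) (hv : StrictAnti v) (hvpos : ∀ i, 0 < v i) (k : ℕ) (hk3 : 3 ≤ k) (hkn : k ≤ n)
    (b : Fin n → ℝ) (hb : NashEq v k b) (i : Fin n) (hw : wins b i) :
    vIdx v (n + 3 - k) < v i :=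
  stmt7_general v hv hvpos k hk3 hkn b hb i hw
end

section
/- The interval of possible equilibrium revenues [v_{n−(k−3)}, v_1] of the k-price auction is weakly shrinking in k: for 2 ≤ k < k' ≤ n+1, every revenue achievable in some pure-strategy Nash equilibrium of the k'-price auction is also achievable in some pure-strategy Nash equilibrium of the k-price auction. -/
open Classical

noncomputable def cardGe {n : ℕ} (b : Fin n → ℝ) (x : ℝ) : ℕ :=
  (Finset.univ.filter fun i => x ≤ b i).card
noncomputable def cardGt {n : ℕ} (b : Fin n → ℝ) (x : ℝ) : ℕ :=
  (Finset.univ.filter fun i => x < b i).card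

lemma countP_ofFn {n : ℕ} (b : Fin n → ℝ) (q : ℝ → Bool) :
    (List.ofFn b).countP q = (Finset.univ.filter fun i => q (b i)).card := by
  rw [List.ofFn_eq_map, List.countP_map, Fin.univ_def]
  simp [Finset.filter, Finset.card, List.countP_eq_length_filter, Function.comp_def]

section Char
variable {n : ℕ}

lemma kth_char (b : Fin n → ℝ) {r : ℕ} (h1 : 1 ≤ r) (h2 : r ≤ n) (x : ℝ) :
    (x ≤ kthHighest b r ↔ r ≤ cardGe b x) ∧ (kthHighest b r ≤ x ↔ cardGt b x < r) := by
  set S := (List.ofFn b).mergeSort (fun x y => decide (y ≤ x)) with hS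
  have hlen : S.length = n := by simp [hS]
  have hsorted : S.Pairwise (fun a c : ℝ => decide (c ≤ a) = true) := by
    apply List.pairwise_mergeSort
    · intro a b c h1 h2; simp at h1 h2 ⊢; linarith
    · intro a b; simpa using le_total b a
  have hmono : ∀ i j : ℕ, ∀ hij : i ≤ j, ∀ hj : j < S.length, S[j] ≤ S[i]'(lt_of_le_of_lt hij hj) := by
    intro i j hij hj
    rcases eq_or_lt_of_le hij with rfl | hlt
    · exact le_refl _
    · have := List.pairwise_iff_getElem.1 hsorted i j (by omega) hj hlt
      simpa using this
  have hr1 : r - 1 < S.length := by omega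
  have hget : kthHighest b r = S[r-1] := by
    rw [kthHighest, ← hS, List.getD_eq_getElem?_getD, List.getElem?_eq_getElem hr1]
    rfl
  have hcount : ∀ q : ℝ → Bool, S.countP q = (Finset.univ.filter fun i => q (b i)).card := by
    intro q
    rw [(List.mergeSort_perm (List.ofFn b) _).countP_eq]
    exact countP_ofFn b q
  have key1 : ∀ (q : ℝ → Bool) (m : ℕ), (hm : m ≤ S.length) →
      (∀ j, (hj : j < m) → q (S[j]'(lt_of_lt_of_le hj hm)) = true) → m ≤ S.countP q := by
    intro q m hm hall
    have hsplit : S.countP q = (S.take m).countP q + (S.drop m).countP q := by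
      rw [← List.countP_append, List.take_append_drop]
    have htake : (S.take m).countP q = (S.take m).length := by
      rw [List.countP_eq_length]
      intro a ha
      rcases List.mem_iff_getElem.1 ha with ⟨i, hi, rfl⟩
      rw [List.getElem_take]
      exact hall i (by simp [List.length_take] at hi; omega)
    rw [hsplit, htake, List.length_take]
    omega
  have key2 : ∀ (q : ℝ → Bool) (m : ℕ), (hm : m ≤ S.length) →
      (∀ j, (hj : j < S.length) → m ≤ j → ¬ (q S[j] = true)) → S.countP q ≤ m := by
    intro q m hm hall
    have hsplit : S.countP q = (S.take m).countP q + (S.drop m).countP q := by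
      rw [← List.countP_append, List.take_append_drop]
    have hdrop : (S.drop m).countP q = 0 := by
      rw [List.countP_eq_zero]
      intro a ha
      rcases List.mem_iff_getElem.1 ha with ⟨i, hi, rfl⟩
      rw [List.getElem_drop]
      exact hall (m+i) (by simp at hi; omega) (by omega)
    have := List.countP_le_length (l := S.take m) (p := q)
    rw [hsplit, hdrop, List.length_take] at *
    omega
  constructor
  · constructor
    · intro hx
      have : r ≤ S.countP (fun y => decide (x ≤ y)) := by
        apply key1 _ r (by omega)
        intro j hj
        simp only [decide_eq_true_eq]
        exact le_trans (hget ▸ hx) (hmono j (r-1) (by omega) hr1)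
      rw [hcount] at this
      simpa [cardGe] using this
    · intro hcard
      by_contra hlt
      push_neg at hlt
      have : S.countP (fun y => decide (x ≤ y)) ≤ r - 1 := by
        apply key2 _ (r-1) (by omega)
        intro j hj hrj
        simp only [decide_eq_true_eq, not_le]
        calc S[j] ≤ S[r-1] := hmono (r-1) j hrj hj
        _ < x := hget ▸ hlt
      rw [hcount] at this
      have : cardGe b x ≤ r - 1 := by simpa [cardGe] using this
      omega
  · constructor
    · intro hx
      have : S.countP (fun y => decide (x < y)) ≤ r - 1 := by
        apply key2 _ (r-1) (by omega)
        intro j hj hrj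
        simp only [decide_eq_true_eq, not_lt]
        calc S[j] ≤ S[r-1] := hmono (r-1) j hrj hj
        _ ≤ x := hget ▸ hx
      rw [hcount] at this
      have : cardGt b x ≤ r - 1 := by simpa [cardGt] using this
      omega
    · intro hcard
      by_contra hlt
      push_neg at hlt
      have : r ≤ S.countP (fun y => decide (x < y)) := by
        apply key1 _ r (by omega)
        intro j hj
        simp only [decide_eq_true_eq]
        exact lt_of_lt_of_le (hget ▸ hlt) (hmono j (r-1) (by omega) hr1)
      rw [hcount] at this
      have : r ≤ cardGt b x := by simpa [cardGt] using this
      omega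

lemma le_kth_iff (b : Fin n → ℝ) {r : ℕ} (h1 : 1 ≤ r) (h2 : r ≤ n) (x : ℝ) :
    x ≤ kthHighest b r ↔ r ≤ cardGe b x := (kth_char b h1 h2 x).1

lemma kth_le_iff (b : Fin n → ℝ) {r : ℕ} (h1 : 1 ≤ r) (h2 : r ≤ n) (x : ℝ) :
    kthHighest b r ≤ x ↔ cardGt b x < r := (kth_char b h1 h2 x).2

end Char

section Cards
variable {n : ℕ}

lemma card_fin_lt (a : ℕ) (ha : a ≤ n) :
    (Finset.univ.filter fun i : Fin n => i.val < a).card = a := by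
  have h : ∀ m ∈ Finset.range a, m < n := fun m hm => lt_of_lt_of_le (Finset.mem_range.1 hm) ha
  have : (Finset.univ.filter fun i : Fin n => i.val < a) = (Finset.range a).attachFin h := by
    ext i
    simp [Finset.mem_attachFin]
  rw [this, Finset.card_attachFin, Finset.card_range]

lemma card_fin_ge (a : ℕ) (ha : a ≤ n) :
    (Finset.univ.filter fun i : Fin n => a ≤ i.val).card = n - a := by
  have h1 := Finset.card_filter_add_card_filter_not
    (s := (Finset.univ : Finset (Fin n))) (p := fun i : Fin n => i.val < a)
  have h2 : (Finset.univ.filter fun i : Fin n => ¬ i.val < a)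
      = (Finset.univ.filter fun i : Fin n => a ≤ i.val) := by
    apply Finset.filter_congr; intro i _; simp [not_lt]
  rw [card_fin_lt a ha, h2, Finset.card_univ, Fintype.card_fin] at h1
  omega

end Cards

section Winner
variable {n : ℕ}

lemma wins_unique {b : Fin n → ℝ} {i j : Fin n} (hi : wins b i) (hj : wins b j) : i = j :=
  le_antisymm (hi.2 j (le_antisymm (hi.1 j) (hj.1 i))) (hj.2 i (le_antisymm (hj.1 i) (hi.1 j)))

lemma exists_winner (hn : 0 < n) (b : Fin n → ℝ) : ∃ i, wins b i := by
  obtain ⟨im, _, him⟩ := Finset.exists_max_image Finset.univ b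
    ⟨⟨0, hn⟩, Finset.mem_univ _⟩
  set W := Finset.univ.filter (fun i' : Fin n => ∀ j, b j ≤ b i') with hW
  have hWne : W.Nonempty := ⟨im, by simp [hW]; intro j; exact him j (Finset.mem_univ j)⟩
  refine ⟨W.min' hWne, ?_, ?_⟩
  · have := W.min'_mem hWne
    simp [hW] at this; exact this
  · intro j hj
    apply W.min'_le
    have hm : ∀ l, b l ≤ b (W.min' hWne) := by
      have := W.min'_mem hWne; simp [hW] at this; exact this
    simp [hW]
    intro l; rw [hj]; exact hm l
end Winner

section PartA
variable {n : ℕ}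

lemma cardGe_zero_of_nonneg {b : Fin n → ℝ} (hpos : ∀ i, 0 ≤ b i) : cardGe b 0 = n := by
  unfold cardGe
  rw [Finset.filter_true_of_mem (fun i _ => hpos i), Finset.card_univ, Fintype.card_fin]

lemma le_kth_one {b : Fin n → ℝ} (hn : 1 ≤ n) (i : Fin n) : b i ≤ kthHighest b 1 := by
  refine (le_kth_iff b le_rfl hn (b i)).2 ?_
  refine Finset.Nonempty.card_pos ⟨i, ?_⟩
  simp

lemma revenue_bounds (hn : 2 ≤ n) (v : Fin n → ℝ) (hv : StrictAnti v)
    (hvpos : ∀ i, 0 < v i) (k k' : ℕ) (hk2 : 2 ≤ k) (hkk' : k < k') (hk'n : k' ≤ n + 1)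
    (b : Fin n → ℝ) (hb : NashEq v k' b) :
    0 ≤ price k' b ∧ price k' b ≤ v ⟨0, by omega⟩ ∧
      ∀ i : Fin n, n - k + 2 ≤ i.val → v i ≤ price k' b := by
  obtain ⟨hpos, hne⟩ := hb
  have hkn : k ≤ n := by omega
  set r : ℕ := if k' = n+1 then 1 else k' with hrdef
  have hrcase : (r = 1 ∧ k' = n+1) ∨ (r = k' ∧ k' ≤ n) := by
    by_cases hcc : k' = n+1
    · left; exact ⟨by simp [hrdef, hcc], hcc⟩
    · right; exact ⟨by simp [hrdef, hcc], by omega⟩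
  have hr1 : 1 ≤ r := by rcases hrcase with ⟨h, _⟩ | ⟨h, _⟩ <;> omega
  have hrn : r ≤ n := by rcases hrcase with ⟨h, _⟩ | ⟨h, h2⟩ <;> omega
  have hprice : ∀ c : Fin n → ℝ, price k' c = kthHighest c r := by
    intro c
    rcases hrcase with ⟨h, h2⟩ | ⟨h, h2⟩
    · rw [price, if_pos h2, h]
    · rw [price, if_neg (by omega), h]
  have hp0 : 0 ≤ price k' b := by
    rw [hprice]
    exact (le_kth_iff b hr1 hrn 0).2 (by rw [cardGe_zero_of_nonneg hpos]; exact hrn)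
  obtain ⟨i₀, hw⟩ := exists_winner (by omega) b
  -- upper bound
  have hub : price k' b ≤ v i₀ := by
    have h1 : utility v k' b i₀ = v i₀ - price k' b := if_pos hw
    have h2 := hne i₀ 0 le_rfl
    have h3 : 0 ≤ utility v k' (Function.update b i₀ 0) i₀ := by
      unfold utility
      split_ifs with hwin
      · have hzero : ∀ j, Function.update b i₀ 0 j = 0 := by
          intro j
          have hle : Function.update b i₀ 0 j ≤ 0 := by
            have := hwin.1 j
            rwa [Function.update_self] at this
          have hge : 0 ≤ Function.update b i₀ 0 j := by
            rcases eq_or_ne j i₀ with rfl | hne'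
            · rw [Function.update_self]
            · rw [Function.update_of_ne hne']; exact hpos j
          linarith
        have hz : price k' (Function.update b i₀ 0) = 0 := by
          rw [hprice]
          apply le_antisymm
          · refine (kth_le_iff _ hr1 hrn 0).2 ?_
            have : (Finset.univ.filter fun j => (0:ℝ) < Function.update b i₀ 0 j) = ∅ := by
              apply Finset.filter_false_of_mem
              intro j _
              rw [hzero j]; exact lt_irrefl 0
            unfold cardGt
            rw [this, Finset.card_empty]; omega
          · refine (le_kth_iff _ hr1 hrn 0).2 ?_
            rw [cardGe_zero_of_nonneg (fun j => le_of_eq (hzero j).symm)]; exact hrn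
        rw [hz]
        linarith [hvpos i₀]
      · exact le_rfl
    rw [h1] at h2
    linarith
  have hub0 : price k' b ≤ v ⟨0, by omega⟩ := by
    refine le_trans hub (hv.antitone ?_)
    simp [Fin.le_def]
  refine ⟨hp0, hub0, ?_⟩
  -- lower bound
  intro i hi
  by_contra hpv
  push_neg at hpv
  have hk3 : 3 ≤ k := by
    have := i.isLt; omega
  have hval : ∀ jj : Fin n, jj.val ≤ n - k + 2 → price k' b < v jj := by
    intro jj hjj
    have h1 : v i ≤ v jj := hv.antitone (by rw [Fin.le_def]; omega)
    linarith
  -- a loser among the first two agents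
  have h0n : 0 < n := by omega
  have h1n : 1 < n := by omega
  obtain ⟨j01, hl01, hv01⟩ : ∃ j : Fin n, ¬ wins b j ∧ j.val ≤ 1 := by
    by_cases hc : i₀ = ⟨0, h0n⟩
    · refine ⟨⟨1, h1n⟩, ?_, by simp⟩
      intro hwj
      have := wins_unique hwj hw
      rw [hc] at this
      simp [Fin.ext_iff] at this
    · refine ⟨⟨0, h0n⟩, ?_, by simp⟩
      intro hwj
      exact hc (wins_unique hw hwj)
  have hval01 : price k' b < v j01 := hval j01 (by omega)
  have hloss : utility v k' b j01 = 0 := if_neg hl01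
  rcases hrcase with ⟨hre, hke⟩ | ⟨hre, hke⟩
  · -- first-price case
    have hmaxp : ∀ jj, b jj ≤ price k' b := by
      intro jj
      rw [hprice, hre]
      exact le_kth_one (by omega) jj
    set t : ℝ := (price k' b + v j01) / 2 with htdef
    have ht1 : price k' b < t := by rw [htdef]; linarith
    have ht2 : t < v j01 := by rw [htdef]; linarith
    have ht0 : 0 ≤ t := by linarith
    have hwint : wins (Function.update b j01 t) j01 := by
      constructor
      · intro jj
        rcases eq_or_ne jj j01 with rfl | hne'
        · exact le_rfl
        · rw [Function.update_of_ne hne', Function.update_self]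
          linarith [hmaxp jj]
      · intro jj hjj
        rcases eq_or_ne jj j01 with rfl | hne'
        · exact le_rfl
        · exfalso
          rw [Function.update_of_ne hne', Function.update_self] at hjj
          have := hmaxp jj
          linarith
    have hpt : price k' (Function.update b j01 t) = t := by
      rw [hprice]
      apply le_antisymm
      · refine (kth_le_iff _ hr1 hrn t).2 ?_
        have hemp : (Finset.univ.filter fun jj => t < Function.update b j01 t jj) = ∅ := by
          apply Finset.filter_false_of_mem
          intro jj _
          rcases eq_or_ne jj j01 with rfl | hne'
          · rw [Function.update_self]; exact lt_irrefl t
          · rw [Function.update_of_ne hne']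
            push_neg
            linarith [hmaxp jj]
        unfold cardGt
        rw [hemp, Finset.card_empty]; omega
      · refine (le_kth_iff _ hr1 hrn t).2 ?_
        have hpos' : 0 < (Finset.univ.filter
            fun jj => t ≤ Function.update b j01 t jj).card :=
          Finset.Nonempty.card_pos ⟨j01, by simp [Function.update_self]⟩
        unfold cardGe
        omega
    have hdev := hne j01 t ht0
    rw [hloss, utility, if_pos hwint, hpt] at hdev
    linarith
  · -- k'-price case with k' ≤ n
    have hcGt : cardGt b (price k' b) < k' := by
      have := (kth_le_iff b hr1 hrn (price k' b)).1 (le_of_eq (hprice b).symm)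
      omega
    set B : ℝ := kthHighest b 1 + 1 with hBdef
    have hmax1 : ∀ jj, b jj ≤ kthHighest b 1 := le_kth_one (by omega)
    have hB0 : 0 ≤ B := by
      have : 0 ≤ kthHighest b 1 :=
        (le_kth_iff b le_rfl (by omega) 0).2 (by rw [cardGe_zero_of_nonneg hpos]; omega)
      rw [hBdef]; linarith
    have hBgt : ∀ jj, b jj < B := by
      intro jj; rw [hBdef]; linarith [hmax1 jj]
    have hdevlem : ∀ j : Fin n, ¬ wins b j → price k' b < v j →
        cardGt (Function.update b j B) (price k' b) < k' → False := by
      intro j hl hpvj hcard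
      have hwinj : wins (Function.update b j B) j := by
        constructor
        · intro jj
          rcases eq_or_ne jj j with rfl | hne'
          · exact le_rfl
          · rw [Function.update_of_ne hne', Function.update_self]
            exact (hBgt jj).le
        · intro jj hjj
          rcases eq_or_ne jj j with rfl | hne'
          · exact le_rfl
          · exfalso
            rw [Function.update_of_ne hne', Function.update_self] at hjj
            exact absurd hjj (ne_of_lt (hBgt jj))
      have hple : price k' (Function.update b j B) ≤ price k' b := by
        rw [hprice]
        exact (kth_le_iff _ hr1 hrn _).2 (by omega)
      have hdev := hne j B hB0
      have e1 : utility v k' (Function.update b j B) j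
          = v j - price k' (Function.update b j B) := if_pos hwinj
      have e2 : utility v k' b j = 0 := if_neg hl
      rw [e1, e2] at hdev
      linarith
    -- choose the deviating loser
    set T := Finset.univ.filter (fun i' : Fin n => price k' b < b i') with hT
    have hmemT : ∀ jj : Fin n, jj ∈ T ↔ price k' b < b jj := by
      intro jj; rw [hT]; simp
    have hcardT : T.card < k' := hcGt
    by_cases hTc : ∃ jj ∈ T, jj ≠ i₀ ∧ price k' b < v jj
    · obtain ⟨j, hjT, hjne, hjv⟩ := hTc
      have hjl : ¬ wins b j := fun hwj => hjne (wins_unique hwj hw)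
      refine hdevlem j hjl hjv ?_
      have hsub : (Finset.univ.filter fun jj => price k' b < Function.update b j B jj) ⊆ T := by
        intro jj hjj
        simp only [Finset.mem_filter, Finset.mem_univ, true_and] at hjj
        rcases eq_or_ne jj j with rfl | hne'
        · exact hjT
        · rw [Function.update_of_ne hne'] at hjj
          exact (hmemT jj).2 hjj
      calc cardGt (Function.update b j B) (price k' b) ≤ T.card := Finset.card_le_card hsub
        _ < k' := hcardT
    · push_neg at hTc
      have hlow01 : ¬ wins b j01 := hl01
      refine hdevlem j01 hl01 hval01 ?_
      have hTsub : T ⊆ insert i₀ (Finset.univ.filter fun jj : Fin n => n - k + 3 ≤ jj.val) := by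
        intro jj hjj
        rcases eq_or_ne jj i₀ with rfl | hne'
        · exact Finset.mem_insert_self _ _
        · have hvle : v jj ≤ price k' b := by
            have := hTc jj hjj hne'
            linarith
          refine Finset.mem_insert_of_mem ?_
          simp only [Finset.mem_filter, Finset.mem_univ, true_and]
          by_contra hcon
          push_neg at hcon
          exact absurd hvle (not_le_of_gt (hval jj (by omega)))
      have hTcard : T.card ≤ k - 2 := by
        have h1 := Finset.card_le_card hTsub
        have h2 := Finset.card_insert_le i₀ (Finset.univ.filter fun jj : Fin n => n - k + 3 ≤ jj.val)
        rw [card_fin_ge (n-k+3) (by omega)] at h2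
        omega
      have hsub : (Finset.univ.filter fun jj => price k' b < Function.update b j01 B jj)
          ⊆ insert j01 T := by
        intro jj hjj
        simp only [Finset.mem_filter, Finset.mem_univ, true_and] at hjj
        rcases eq_or_ne jj j01 with rfl | hne'
        · exact Finset.mem_insert_self _ _
        · rw [Function.update_of_ne hne'] at hjj
          exact Finset.mem_insert_of_mem ((hmemT jj).2 hjj)
      have := Finset.card_le_card hsub
      have := Finset.card_insert_le j01 T
      have : cardGt (Function.update b j01 B) (price k' b) ≤ 1 + T.card := by
        unfold cardGt; omega
      omega
end PartA

section PartB
variable {n : ℕ}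

lemma construct (hn : 2 ≤ n) (v : Fin n → ℝ) (hv : StrictAnti v) (hvpos : ∀ i, 0 < v i)
    (k : ℕ) (hk2 : 2 ≤ k) (hkn : k ≤ n) (p : ℝ) (hp0 : 0 ≤ p)
    (hple : p ≤ v ⟨0, by omega⟩)
    (hlow : ∀ i : Fin n, n - k + 2 ≤ i.val → v i ≤ p) :
    ∃ b : Fin n → ℝ, NashEq v k b ∧ price k b = p := by
  have h0n : 0 < n := by omega
  have h1n : 1 < n := by omega
  set v0 : ℝ := v ⟨0, h0n⟩ with hv0
  have hv0pos : 0 < v0 := hvpos _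
  set b0 : Fin n → ℝ := fun i =>
    if i.val = 0 then v0 + 1 else if i.val = 1 then p else
      if n - k + 2 ≤ i.val then v0 else 0 with hb0
  have hbig : ∀ j : Fin n, j.val = 0 → b0 j = v0 + 1 := by
    intro j hj; simp only [hb0]; rw [if_pos hj]
  have hmid : ∀ j : Fin n, j.val = 1 → b0 j = p := by
    intro j hj; simp only [hb0]; rw [if_neg (by omega), if_pos hj]
  have hyv : ∀ j : Fin n, 2 ≤ j.val → n - k + 2 ≤ j.val → b0 j = v0 := by
    intro j h2 hY; simp only [hb0]; rw [if_neg (by omega), if_neg (by omega), if_pos hY]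
  have hzv : ∀ j : Fin n, 2 ≤ j.val → j.val < n - k + 2 → b0 j = 0 := by
    intro j h2 hY; simp only [hb0]; rw [if_neg (by omega), if_neg (by omega), if_neg (by omega)]
  have hvals : ∀ j : Fin n, b0 j = v0 + 1 ∨ b0 j = p ∨ b0 j = v0 ∨ b0 j = 0 := by
    intro j
    rcases Nat.lt_or_ge j.val 2 with h2 | h2
    · rcases Nat.lt_or_ge j.val 1 with h1 | h1
      · exact Or.inl (hbig j (by omega))
      · exact Or.inr (Or.inl (hmid j (by omega)))
    · rcases Nat.lt_or_ge j.val (n-k+2) with hY | hY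
      · exact Or.inr (Or.inr (Or.inr (hzv j h2 hY)))
      · exact Or.inr (Or.inr (Or.inl (hyv j h2 hY)))
  have hle : ∀ j : Fin n, b0 j ≤ v0 + 1 := by
    intro j; rcases hvals j with h | h | h | h <;> rw [h] <;> linarith
  have hlt : ∀ j : Fin n, j.val ≠ 0 → b0 j ≤ v0 := by
    intro j hj
    rcases Nat.lt_or_ge j.val 2 with h2 | h2
    · rw [hmid j (by omega)]; exact hple
    · rcases Nat.lt_or_ge j.val (n-k+2) with hY | hY
      · rw [hzv j h2 hY]; linarith
      · rw [hyv j h2 hY]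
  have hnonneg : ∀ j : Fin n, 0 ≤ b0 j := by
    intro j; rcases hvals j with h | h | h | h <;> rw [h] <;> linarith
  have hpx : ∀ c : Fin n → ℝ, price k c = kthHighest c k := by
    intro c; rw [price, if_neg (by omega)]
  -- index sets
  set A1 : Finset (Fin n) := Finset.univ.filter (fun j : Fin n => j.val < 1) with hA1
  set A2 : Finset (Fin n) := Finset.univ.filter (fun j : Fin n => j.val < 2) with hA2
  set Y : Finset (Fin n) := Finset.univ.filter (fun j : Fin n => n - k + 2 ≤ j.val) with hY
  have hA1card : A1.card = 1 := card_fin_lt 1 (by omega)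
  have hA2card : A2.card = 2 := card_fin_lt 2 (by omega)
  have hYcard : Y.card = k - 2 := by
    rw [hY, card_fin_ge (n-k+2) (by omega)]; omega
  have hmemA1 : ∀ j : Fin n, j ∈ A1 ↔ j.val < 1 := by intro j; rw [hA1]; simp
  have hmemA2 : ∀ j : Fin n, j ∈ A2 ↔ j.val < 2 := by intro j; rw [hA2]; simp
  have hmemY : ∀ j : Fin n, j ∈ Y ↔ n - k + 2 ≤ j.val := by intro j; rw [hY]; simp
  have hd1 : Disjoint A1 Y := by
    rw [Finset.disjoint_left]
    intro a ha hb; rw [hmemA1] at ha; rw [hmemY] at hb; omega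
  have hd2 : Disjoint A2 Y := by
    rw [Finset.disjoint_left]
    intro a ha hb; rw [hmemA2] at ha; rw [hmemY] at hb; omega
  have hcard1Y : (A1 ∪ Y).card = k - 1 := by
    rw [Finset.card_union_of_disjoint hd1, hA1card, hYcard]; omega
  have hcard2Y : (A2 ∪ Y).card = k := by
    rw [Finset.card_union_of_disjoint hd2, hA2card, hYcard]; omega
  -- price of b0 is p
  have hprice0 : price k b0 = p := by
    rw [hpx]
    apply le_antisymm
    · refine (kth_le_iff b0 (by omega) hkn p).2 ?_
      have hsub : (Finset.univ.filter fun j => p < b0 j) ⊆ A1 ∪ Y := by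
        intro j hj
        simp only [Finset.mem_filter, Finset.mem_univ, true_and] at hj
        rcases Nat.lt_or_ge j.val 2 with h2 | h2
        · rcases Nat.lt_or_ge j.val 1 with h1 | h1
          · exact Finset.mem_union_left _ ((hmemA1 j).2 h1)
          · rw [hmid j (by omega)] at hj; exact absurd hj (lt_irrefl p)
        · rcases Nat.lt_or_ge j.val (n-k+2) with hY' | hY'
          · rw [hzv j h2 hY'] at hj; exact absurd hj (not_lt_of_ge hp0)
          · exact Finset.mem_union_right _ ((hmemY j).2 hY')
      have := Finset.card_le_card hsub
      unfold cardGt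
      omega
    · refine (le_kth_iff b0 (by omega) hkn p).2 ?_
      have hsub : A2 ∪ Y ⊆ (Finset.univ.filter fun j => p ≤ b0 j) := by
        intro j hj
        simp only [Finset.mem_filter, Finset.mem_univ, true_and]
        rcases Finset.mem_union.1 hj with hj | hj
        · rw [hmemA2] at hj
          rcases Nat.lt_or_ge j.val 1 with h1 | h1
          · rw [hbig j (by omega)]; linarith
          · rw [hmid j (by omega)]
        · rw [hmemY] at hj
          rw [hyv j (by omega) hj]; exact hple
      have := Finset.card_le_card hsub
      unfold cardGe
      omega
  have hwin0 : wins b0 ⟨0, h0n⟩ := by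
    constructor
    · intro j; rw [hbig ⟨0, h0n⟩ rfl]; exact hle j
    · intro j _; rw [Fin.le_def]; exact Nat.zero_le _
  have hnotwin : ∀ i : Fin n, i.val ≠ 0 → ¬ wins b0 i := by
    intro i hi hwi
    have h1 := hwi.1 ⟨0, h0n⟩
    rw [hbig ⟨0, h0n⟩ rfl] at h1
    have h2 := hlt i hi
    linarith
  refine ⟨b0, ⟨hnonneg, ?_⟩, hprice0⟩
  intro i b' hb'
  by_cases hi0 : i.val = 0
  · have hieq : i = ⟨0, h0n⟩ := Fin.ext hi0
    have hrhs : utility v k b0 i = v0 - p := by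
      rw [hieq, utility, if_pos hwin0, hprice0, ← hv0]
    rw [hrhs]
    by_cases hwd : wins (Function.update b0 i b') i
    · have hbp : p ≤ b' := by
        have h1 := hwd.1 ⟨1, h1n⟩
        rw [Function.update_self, Function.update_of_ne (by rw [hieq]; intro hc; simp [Fin.ext_iff] at hc)] at h1
        rw [hmid ⟨1, h1n⟩ rfl] at h1
        exact h1
      have hpw : price k (Function.update b0 i b') = p := by
        rw [hpx]
        apply le_antisymm
        · refine (kth_le_iff _ (by omega) hkn p).2 ?_
          have hsub : (Finset.univ.filter fun j => p < Function.update b0 i b' j) ⊆ A1 ∪ Y := by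
            intro j hj
            simp only [Finset.mem_filter, Finset.mem_univ, true_and] at hj
            rcases eq_or_ne j i with rfl | hne'
            · exact Finset.mem_union_left _ ((hmemA1 j).2 (by omega))
            · rw [Function.update_of_ne hne'] at hj
              rcases Nat.lt_or_ge j.val 2 with h2 | h2
              · rcases Nat.lt_or_ge j.val 1 with h1 | h1
                · exact Finset.mem_union_left _ ((hmemA1 j).2 h1)
                · rw [hmid j (by omega)] at hj; exact absurd hj (lt_irrefl p)
              · rcases Nat.lt_or_ge j.val (n-k+2) with hY' | hY'
                · rw [hzv j h2 hY'] at hj; exact absurd hj (not_lt_of_ge hp0)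
                · exact Finset.mem_union_right _ ((hmemY j).2 hY')
          have := Finset.card_le_card hsub
          unfold cardGt
          omega
        · refine (le_kth_iff _ (by omega) hkn p).2 ?_
          have hsub : A2 ∪ Y ⊆ (Finset.univ.filter fun j => p ≤ Function.update b0 i b' j) := by
            intro j hj
            simp only [Finset.mem_filter, Finset.mem_univ, true_and]
            rcases eq_or_ne j i with rfl | hne'
            · rw [Function.update_self]; exact hbp
            · rw [Function.update_of_ne hne']
              rcases Finset.mem_union.1 hj with hj | hj
              · rw [hmemA2] at hj
                rcases Nat.lt_or_ge j.val 1 with h1 | h1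
                · rw [hbig j (by omega)]; linarith
                · rw [hmid j (by omega)]
              · rw [hmemY] at hj
                rw [hyv j (by omega) hj]; exact hple
          have := Finset.card_le_card hsub
          unfold cardGe
          omega
      rw [utility, if_pos hwd, hpw, hieq, ← hv0]
    · rw [utility, if_neg hwd]
      linarith
  · have hrhs : utility v k b0 i = 0 := if_neg (hnotwin i hi0)
    rw [hrhs]
    by_cases hwd : wins (Function.update b0 i b') i
    · have hbB : v0 + 1 ≤ b' := by
        have h1 := hwd.1 ⟨0, h0n⟩
        rw [Function.update_self, Function.update_of_ne
          (by intro hc; exact hi0 (by rw [← hc]))] at h1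
        rwa [hbig ⟨0, h0n⟩ rfl] at h1
      have hkey : v i ≤ price k (Function.update b0 i b') := by
        by_cases hiY : n - k + 2 ≤ i.val
        · refine le_trans (hlow i hiY) ?_
          rw [hpx]
          refine (le_kth_iff _ (by omega) hkn p).2 ?_
          have hsub : A2 ∪ Y ⊆ (Finset.univ.filter fun j => p ≤ Function.update b0 i b' j) := by
            intro j hj
            simp only [Finset.mem_filter, Finset.mem_univ, true_and]
            rcases eq_or_ne j i with rfl | hne'
            · rw [Function.update_self]; linarith
            · rw [Function.update_of_ne hne']
              rcases Finset.mem_union.1 hj with hj | hj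
              · rw [hmemA2] at hj
                rcases Nat.lt_or_ge j.val 1 with h1 | h1
                · rw [hbig j (by omega)]; linarith
                · rw [hmid j (by omega)]
              · rw [hmemY] at hj
                rw [hyv j (by omega) hj]; exact hple
          have := Finset.card_le_card hsub
          unfold cardGe
          omega
        · have hvi : v i ≤ v0 := hv.antitone (by rw [Fin.le_def]; exact Nat.zero_le _)
          refine le_trans hvi ?_
          rw [hpx]
          refine (le_kth_iff _ (by omega) hkn v0).2 ?_
          have hinot : i ∉ A1 ∪ Y := by
            intro hc
            rcases Finset.mem_union.1 hc with hc | hc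
            · rw [hmemA1] at hc; omega
            · rw [hmemY] at hc; omega
          have hsub : insert i (A1 ∪ Y) ⊆
              (Finset.univ.filter fun j => v0 ≤ Function.update b0 i b' j) := by
            intro j hj
            simp only [Finset.mem_filter, Finset.mem_univ, true_and]
            rcases Finset.mem_insert.1 hj with rfl | hj
            · rw [Function.update_self]; linarith
            · have hne' : j ≠ i := fun hc => hinot (hc ▸ hj)
              rw [Function.update_of_ne hne']
              rcases Finset.mem_union.1 hj with hj | hj
              · rw [hmemA1] at hj
                rw [hbig j (by omega)]; linarith
              · rw [hmemY] at hj
                rw [hyv j (by omega) hj]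
          have h1 := Finset.card_le_card hsub
          rw [Finset.card_insert_of_notMem hinot, hcard1Y] at h1
          unfold cardGe
          omega
      rw [utility, if_pos hwd]
      linarith
    · rw [utility, if_neg hwd]
end PartB

theorem stmt17 {n : ℕ} (hn : 2 ≤ n) (v : Fin n → ℝ) (hv : StrictAnti v) (hvpos : ∀ i, 0 < v i) (k k' : ℕ) (hk2 : 2 ≤ k) (hkk' : k < k')
    (hk'n : k' ≤ n + 1) (p : ℝ)
    (h : ∃ b : Fin n → ℝ, NashEq v k' b ∧ price k' b = p) :
    ∃ b : Fin n → ℝ, NashEq v k b ∧ price k b = p := by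
  obtain ⟨b, hb, hp⟩ := h
  have hkn : k ≤ n := by omega
  obtain ⟨h0, h1, h2⟩ := revenue_bounds hn v hv hvpos k k' hk2 hkk' hk'n b hb
  rw [hp] at h0 h1 h2
  exact construct hn v hv hvpos k hk2 hkn p h0 h1 h2
end
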